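/- arXiv:2012.00698 — 2 statements merged into one kernel-verified Lean document; each statement's English description precedes it below -/
import Mathlib

section
/- Along any solution of the normalized SEIR system with (s,e,i) ∈ Σ (i.e., s,e,i ≥ 0, s+e+i ≤ 1), the Lyapunov function V = εe + (ε+b)i satisfies d/dt V = i[εβs + εμe + μ(ε+b)i − (ε+b)(γ+μ+b)] ≤ i[max{εβ, εμ, μ(ε+b)} − (ε+b)(γ+μ+b)]. -/
/-! Differentiating `V = ε e + (ε + b) i` along the flow, the linear terms in `e` cancel and what
remains is `i` times an affine function of `(s, e, i)`. On `Σ` that affine part is a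
sub-convex combination of `εβ`, `εμ`, `μ(ε + b)`, so it is at most their (nonnegative) maximum. -/

theorem mul_add_mul_add_mul_le_max {R : Type*} [CommRing R] [LinearOrder R] [IsOrderedRing R]
    {a b c x y z : R} (hmax : 0 ≤ max (max a b) c) (hx : 0 ≤ x) (hy : 0 ≤ y) (hz : 0 ≤ z)
    (hsum : x + y + z ≤ 1) :
    a * x + b * y + c * z ≤ max (max a b) c := by
  set M := max (max a b) c
  calc a * x + b * y + c * z
      ≤ M * x + M * y + M * z := by
        gcongr
        · exact le_trans (le_max_left a b) (le_max_left _ c)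
        · exact le_trans (le_max_right a b) (le_max_left _ c)
        · exact le_max_right _ c
    _ = M * (x + y + z) := by ring
    _ ≤ M := mul_le_of_le_one_right hmax hsum

theorem hasDerivAt_seir_lyapunov {b β μ ε γ : ℝ} {s e i : ℝ → ℝ} {t : ℝ}
    (he : HasDerivAt e (β * i t * s t - (ε + b) * e t + μ * i t * e t) t)
    (hi : HasDerivAt i (ε * e t - (μ + γ + b) * i t + μ * (i t)^2) t) :
    HasDerivAt (fun τ => ε * e τ + (ε + b) * i τ)
      (i t * (ε * β * s t + ε * μ * e t + μ * (ε + b) * i t - (ε + b) * (γ + μ + b))) t :=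
  ((he.const_mul ε).add (hi.const_mul (ε + b))).congr_deriv (by ring)

theorem seir_lyapunov_derivative_bound_general
    (b β μ ε γ : ℝ) (hβ : 0 ≤ β) (hε : 0 ≤ ε)
    (s e i : ℝ → ℝ) (t : ℝ)
    (he : HasDerivAt e (β * i t * s t - (ε + b) * e t + μ * i t * e t) t)
    (hi : HasDerivAt i (ε * e t - (μ + γ + b) * i t + μ * (i t)^2) t)
    (hSigma : 0 ≤ s t ∧ 0 ≤ e t ∧ 0 ≤ i t ∧ s t + e t + i t ≤ 1) :
    HasDerivAt (fun τ => ε * e τ + (ε + b) * i τ)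
      (i t * (ε * β * s t + ε * μ * e t + μ * (ε + b) * i t - (ε + b) * (γ + μ + b))) t ∧
    i t * (ε * β * s t + ε * μ * e t + μ * (ε + b) * i t - (ε + b) * (γ + μ + b)) ≤
      i t * (max (max (ε * β) (ε * μ)) (μ * (ε + b)) - (ε + b) * (γ + μ + b)) := by
  obtain ⟨hs0, he0, hi0, hsum⟩ := hSigma
  refine ⟨hasDerivAt_seir_lyapunov he hi, ?_⟩
  have hmax : 0 ≤ max (max (ε * β) (ε * μ)) (μ * (ε + b)) :=
    le_trans (mul_nonneg hε hβ) (le_trans (le_max_left _ _) (le_max_left _ _))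
  have hrate := mul_add_mul_add_mul_le_max hmax hs0 he0 hi0 hsum
  exact mul_le_mul_of_nonneg_left (sub_le_sub_right hrate _) hi0

/-- Along solutions in Σ, the function V = ε e + (ε+b) i satisfies the stated
derivative identity and bound. -/
theorem seir_lyapunov_derivative_bound
    (b β μ ε γ : ℝ) (hb : 0 ≤ b) (hβ : 0 ≤ β) (hμ : 0 ≤ μ) (hε : 0 ≤ ε) (hγ : 0 ≤ γ)
    (s e i : ℝ → ℝ) (t : ℝ)
    (hs : HasDerivAt s (b - b * s t - β * i t * s t + μ * i t * s t) t)
    (he : HasDerivAt e (β * i t * s t - (ε + b) * e t + μ * i t * e t) t)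
    (hi : HasDerivAt i (ε * e t - (μ + γ + b) * i t + μ * (i t)^2) t)
    (hSigma : 0 ≤ s t ∧ 0 ≤ e t ∧ 0 ≤ i t ∧ s t + e t + i t ≤ 1) :
    HasDerivAt (fun τ => ε * e τ + (ε + b) * i τ)
      (i t * (ε * β * s t + ε * μ * e t + μ * (ε + b) * i t - (ε + b) * (γ + μ + b))) t ∧
    i t * (ε * β * s t + ε * μ * e t + μ * (ε + b) * i t - (ε + b) * (γ + μ + b)) ≤
      i t * (max (max (ε * β) (ε * μ)) (μ * (ε + b)) - (ε + b) * (γ + μ + b)) :=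
  seir_lyapunov_derivative_bound_general b β μ ε γ hβ hε s e i t he hi hSigma
end

section
/- If the modified contact number σ = βε / ((ε+b)(γ+μ+b)) satisfies σ ≤ 1, and additionally εμ ≤ (ε+b)(γ+μ+b) and μ(ε+b) ≤ (ε+b)(γ+μ+b), then along any solution of the normalized SEIR system staying in Σ, the function V(t) = εe(t) + (ε+b)i(t) is nonincreasing in t. -/
/-- If σ ≤ 1 (plus the two auxiliary inequalities), then V(t) = ε e(t) + (ε+b) i(t)
is nonincreasing along any solution of the normalized SEIR system staying in Σ. -/
theorem seir_lyapunov_nonincreasing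
    (b β μ ε γ : ℝ) (hb : 0 < b) (hβ : 0 < β) (hμ : 0 < μ) (hε : 0 < ε) (hγ : 0 < γ)
    (hσ : β * ε / ((ε + b) * (γ + μ + b)) ≤ 1)
    (h1 : ε * μ ≤ (ε + b) * (γ + μ + b))
    (h2 : μ * (ε + b) ≤ (ε + b) * (γ + μ + b))
    (s e i : ℝ → ℝ)
    (hs : ∀ t, HasDerivAt s (b - b * s t - β * i t * s t + μ * i t * s t) t)
    (he : ∀ t, HasDerivAt e (β * i t * s t - (ε + b) * e t + μ * i t * e t) t)
    (hi : ∀ t, HasDerivAt i (ε * e t - (μ + γ + b) * i t + μ * (i t)^2) t)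
    (hSigma : ∀ t, 0 ≤ s t ∧ 0 ≤ e t ∧ 0 ≤ i t ∧ s t + e t + i t ≤ 1) :
    Antitone (fun t => ε * e t + (ε + b) * i t) := by
  have hK : (0:ℝ) < (ε + b) * (γ + μ + b) := by positivity
  have hβε : β * ε ≤ (ε + b) * (γ + μ + b) := by
    rwa [div_le_one hK] at hσ
  have hder : ∀ t, HasDerivAt (fun t => ε * e t + (ε + b) * i t)
      (ε * (β * i t * s t - (ε + b) * e t + μ * i t * e t)
        + (ε + b) * (ε * e t - (μ + γ + b) * i t + μ * (i t)^2)) t := by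
    intro t
    exact ((he t).const_mul ε).add ((hi t).const_mul (ε + b))
  apply antitone_of_deriv_nonpos
  · intro t
    exact (hder t).differentiableAt
  · intro t
    rw [(hder t).deriv]
    obtain ⟨hs0, he0, hi0, hsum⟩ := hSigma t
    set K := (ε + b) * (γ + μ + b) with hKdef
    have key : ε * β * s t + ε * μ * e t + μ * (ε + b) * i t ≤ K := by
      have hA : ε * β * s t ≤ K * s t := by nlinarith
      have hB : ε * μ * e t ≤ K * e t := by nlinarith
      have hC : μ * (ε + b) * i t ≤ K * i t := by nlinarith
      have hsum' : K * s t + K * e t + K * i t ≤ K := by nlinarith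
      linarith
    have heq : ε * (β * i t * s t - (ε + b) * e t + μ * i t * e t)
        + (ε + b) * (ε * e t - (μ + γ + b) * i t + μ * (i t)^2)
        = i t * (ε * β * s t + ε * μ * e t + μ * (ε + b) * i t - K) := by
      rw [hKdef]; ring
    rw [heq]
    exact mul_nonpos_of_nonneg_of_nonpos hi0 (sub_nonpos.2 key)
end
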